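/- Let F be a field, let q ∈ F be nonzero with q ≠ 1, and let c ∈ {q, -1}. Define an F-linear operator T on the field of rational functions F(x) by (Tf)(x) = (c + (1-q)/(1 - x⁻¹))·f(x⁻¹) + ((q-1)/(1 - x⁻¹))·f(x). Then T satisfies the quadratic relation (T - q)(T + 1) = 0, i.e., T²f = (q-1)·Tf + q·f for all f ∈ F(x). -/
import Mathlib


/-- The rank-one Demazure–Lusztig-type operator
`(Tf)(x) = (c + (1-q)/(1 - x⁻¹))·f(x⁻¹) + ((q-1)/(1 - x⁻¹))·f(x)`
on `F(x)`, where `c ∈ {q, -1}` and `q ≠ 0, 1`, satisfies the quadratic relation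
`T² f = (q-1)·T f + q·f`.  Here `σ` is the involutive field automorphism of `F(x)`
fixing constants and sending `x ↦ x⁻¹`. -/
theorem stmt3 {F : Type*} [Field F] (q c : F) (hq0 : q ≠ 0) (hq1 : q ≠ 1)
    (hc : c = q ∨ c = -1)
    (σ : RatFunc F ≃+* RatFunc F)
    (hσC : ∀ a : F, σ (RatFunc.C a) = RatFunc.C a)
    (hσσ : ∀ f, σ (σ f) = f)
    (hσX : σ RatFunc.X = (RatFunc.X)⁻¹)
    (T : RatFunc F → RatFunc F)
    (hT : ∀ f, T f = (RatFunc.C c + RatFunc.C (1 - q) / (1 - (RatFunc.X)⁻¹)) * σ f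
        + (RatFunc.C (q - 1) / (1 - (RatFunc.X)⁻¹)) * f)
    (f : RatFunc F) :
    T (T f) = RatFunc.C (q - 1) * T f + RatFunc.C q * f := by
  have hX : (RatFunc.X : RatFunc F) ≠ 0 := RatFunc.X_ne_zero
  have hX1 : (RatFunc.X : RatFunc F) ≠ 1 := by
    intro h
    have : (Polynomial.X : Polynomial F) = 1 := by
      apply RatFunc.algebraMap_injective F
      simpa [RatFunc.algebraMap_X] using h
    have h2 := congrArg (fun p => p.coeff 1) this
    simp [Polynomial.coeff_one] at h2
  have hv : (1 : RatFunc F) - RatFunc.X ≠ 0 := sub_ne_zero.mpr (Ne.symm hX1)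
  have hu : (1 : RatFunc F) - (RatFunc.X)⁻¹ ≠ 0 := by
    intro h
    have : (RatFunc.X : RatFunc F)⁻¹ = 1 := by linear_combination -h
    exact hX1 (by rw [← inv_inv (RatFunc.X : RatFunc F), this, inv_one])
  have hσXi : σ ((RatFunc.X : RatFunc F)⁻¹) = RatFunc.X := by
    rw [map_inv₀, hσX, inv_inv]
  rw [hT, hT]
  simp only [map_add, map_mul, map_sub, map_one, map_div₀, hσσ, hσXi, hσC]
  have hv' : (RatFunc.X : RatFunc F) - 1 ≠ 0 := sub_ne_zero.mpr hX1
  field_simp [hv']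
  rcases hc with rfl | rfl
  · ring
  · simp only [map_neg, map_one]
    ring
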